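/- Let Ω be a finite set of n players and let G₁ = {id} be the trivial permutation group. Then the dimension of the affine space 𝒜_{G₁} of all quasi-values on Ω equals n·2^{n−1} − 2^n + 1. -/

import Mathlib

open scoped BigOperators

/-- The space of cooperative games on player set `Ω`: real-valued functions on
coalitions vanishing on the empty coalition. -/
def GameSpace (Ω : Type*) [DecidableEq Ω] : Submodule ℝ (Finset Ω → ℝ) where
  carrier := {v | v ∅ = 0}
  add_mem' := by
    intro a b ha hb
    simp only [Set.mem_setOf_eq, Pi.add_apply] at *
    simp [ha, hb]
  zero_mem' := rfl
  smul_mem' := by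
    intro c v hv
    simp only [Set.mem_setOf_eq, Pi.smul_apply] at *
    simp [hv]

/-- A (linear) game value: a linear operator from games to payoff vectors. -/
abbrev GameValue (Ω : Type*) [DecidableEq Ω] := GameSpace Ω →ₗ[ℝ] (Ω → ℝ)

/-- Player `i` is a null player of the game `v`: `v(R ∪ {i}) = v(R)` for all `R`. -/
def IsNullPlayer {Ω : Type*} [DecidableEq Ω] (i : Ω) (v : GameSpace Ω) : Prop :=
  ∀ R : Finset Ω, (v : Finset Ω → ℝ) (insert i R) = (v : Finset Ω → ℝ) R

/-- A quasi-value: a linear game value satisfying the null-player property and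
efficiency. -/
def IsQuasiValue {Ω : Type*} [Fintype Ω] [DecidableEq Ω] (φ : GameValue Ω) : Prop :=
  (∀ (v : GameSpace Ω) (i : Ω), IsNullPlayer i v → φ v i = 0) ∧
  (∀ v : GameSpace Ω, ∑ i, φ v i = (v : Finset Ω → ℝ) Finset.univ)

/-- The action of a permutation on a game: `(g • v)(R) = v(g⁻¹(R))`. -/
def permGame {Ω : Type*} [DecidableEq Ω] (g : Equiv.Perm Ω) (v : GameSpace Ω) :
    GameSpace Ω :=
  ⟨fun R => (v : Finset Ω → ℝ) (R.image (g⁻¹ : Equiv.Perm Ω)), by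
    show (v : Finset Ω → ℝ) ((∅ : Finset Ω).image (g⁻¹ : Equiv.Perm Ω)) = 0
    rw [Finset.image_empty]
    exact v.2⟩

/-- `φ` is symmetric with respect to all permutations in `G`:
`φ(g • v) = g • φ(v)`, i.e. `φ(g • v)ᵢ = φ(v)_{g⁻¹ i}` for all `g ∈ G`. -/
def IsGSym {Ω : Type*} [DecidableEq Ω] (G : Subgroup (Equiv.Perm Ω))
    (φ : GameValue Ω) : Prop :=
  ∀ g ∈ G, ∀ (v : GameSpace Ω) (i : Ω), φ (permGame g v) i = φ v (g⁻¹ i)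

/-- The unanimity game `u_R` for a nonempty coalition `R`. -/
def unanimity {Ω : Type*} [DecidableEq Ω] (R : Finset Ω) (hR : R.Nonempty) :
    GameSpace Ω :=
  ⟨fun S => if R ⊆ S then (1 : ℝ) else 0, by
    show (if R ⊆ (∅ : Finset Ω) then (1 : ℝ) else 0) = 0
    simp [Finset.subset_empty, hR.ne_empty]⟩

/-!
The unanimity games `u_R` (`R ≠ ∅`) form a basis of the game space: they are linearly
independent by triangularity with respect to inclusion, and there are `2ⁿ - 1` of them, the
dimension of the game space. A linear value is thus a free choice of the vectors `φ(u_R)`, and it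
is a quasi-value exactly when every `φ(u_R)` is supported on `R` and has coordinate sum `1`: a game
with null player `i` is fixed by `v ↦ v(· \ {i})`, which kills every `u_R` with `i ∈ R`. Hence
the quasi-values form a product of affine spaces of dimensions `|R| - 1`, and
`∑_{R ≠ ∅} (|R| - 1) = n·2ⁿ⁻¹ - (2ⁿ - 1)`.
-/

open Finset Module

theorem Submodule.finrank_pi_univ {K ι : Type*} [Field K] [Fintype ι] {V : ι → Type*}
    [∀ i, AddCommGroup (V i)] [∀ i, Module K (V i)] [∀ i, FiniteDimensional K (V i)]
    (p : ∀ i, Submodule K (V i)) :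
    finrank K (Submodule.pi Set.univ p) = ∑ i, finrank K (p i) := by
  let e : Submodule.pi Set.univ p ≃ₗ[K] ∀ i, p i :=
    { toFun x i := ⟨x.1 i, x.2 i (Set.mem_univ i)⟩
      invFun y := ⟨fun i => y i, fun i _ => (y i).2⟩
      map_add' _ _ := rfl
      map_smul' _ _ := rfl
      left_inv _ := rfl
      right_inv _ := rfl }
  rw [e.finrank_eq, finrank_pi_fintype]

theorem Fintype.sum_card_finset (α : Type*) [Fintype α] :
    ∑ s : Finset α, #s = Fintype.card α * 2 ^ (Fintype.card α - 1) := by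
  rw [← powerset_univ, sum_powerset_apply_card (fun m => m), card_univ,
    ← Nat.sum_range_mul_choose]
  simp only [smul_eq_mul, mul_comm]

section ZeroSum

variable (K : Type*) {ι : Type*} [Field K]

def supportedIn (s : Finset ι) : Submodule K (ι → K) :=
  LinearMap.ker (LinearMap.funLeft K K (Subtype.val : {i // i ∉ s} → ι))

variable {K}

theorem mem_supportedIn {s : Finset ι} {x : ι → K} :
    x ∈ supportedIn K s ↔ ∀ i ∉ s, x i = 0 := by
  simp [supportedIn, funext_iff]

theorem single_mem_supportedIn [DecidableEq ι] {s : Finset ι} {j : ι} (hj : j ∈ s) (a : K) :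
    Pi.single j a ∈ supportedIn K s :=
  mem_supportedIn.2 fun _ hi => Pi.single_eq_of_ne (ne_of_mem_of_not_mem hj hi).symm _

variable [Fintype ι]

theorem finrank_supportedIn (s : Finset ι) : finrank K (supportedIn K s) = #s := by
  classical
  have h := (LinearMap.funLeft K K (Subtype.val : {i // i ∉ s} → ι)).finrank_range_add_finrank_ker
  rw [LinearMap.range_eq_top.2 (LinearMap.funLeft_surjective_of_injective _ _ _
    Subtype.val_injective), finrank_top, finrank_fintype_fun_eq_card, finrank_fintype_fun_eq_card,
    Fintype.card_subtype_compl, Fintype.card_coe] at h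
  have := card_le_univ s
  rw [supportedIn]
  omega

variable (K ι) in
def coordSum : (ι → K) →ₗ[K] K := ∑ i, LinearMap.proj i

@[simp]
theorem coordSum_apply (x : ι → K) : coordSum K ι x = ∑ i, x i := by
  simp [coordSum]

variable (K) in
def zeroSumIn (s : Finset ι) : Submodule K (ι → K) :=
  supportedIn K s ⊓ LinearMap.ker (coordSum K ι)

theorem mem_zeroSumIn {s : Finset ι} {x : ι → K} :
    x ∈ zeroSumIn K s ↔ (∀ i ∉ s, x i = 0) ∧ ∑ i, x i = 0 := by
  simp [zeroSumIn, mem_supportedIn]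

variable [DecidableEq ι]

theorem finrank_zeroSumIn {s : Finset ι} (hs : s.Nonempty) :
    finrank K (zeroSumIn K s) = #s - 1 := by
  obtain ⟨j, hj⟩ := hs
  have hsum : coordSum K ι (Pi.single j 1) = 1 := by simp
  have hsup : supportedIn K s ⊔ LinearMap.ker (coordSum K ι) = ⊤ := by
    refine eq_top_iff.2 fun x _ => Submodule.mem_sup.2
      ⟨Pi.single j (coordSum K ι x), single_mem_supportedIn hj _,
        x - Pi.single j (coordSum K ι x), ?_, add_sub_cancel _ _⟩
    simp
  have hker := Module.Dual.finrank_ker_add_one_of_ne_zero (f := coordSum K ι)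
    fun h => by simp [h] at hsum
  have h := Submodule.finrank_sup_add_finrank_inf_eq (supportedIn K s)
    (LinearMap.ker (coordSum K ι))
  rw [hsup, finrank_top, finrank_supportedIn, finrank_fintype_fun_eq_card] at h
  rw [finrank_fintype_fun_eq_card] at hker
  rw [zeroSumIn]
  omega

theorem sub_single_mem_zeroSumIn_iff {s : Finset ι} {j : ι} (hj : j ∈ s) (x : ι → K) :
    x - Pi.single j 1 ∈ zeroSumIn K s ↔ (∀ i ∉ s, x i = 0) ∧ ∑ i, x i = 1 := by
  have hsingle := mem_supportedIn.1 (single_mem_supportedIn hj (1 : K))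
  simp only [mem_zeroSumIn, Pi.sub_apply, sum_sub_distrib, sum_pi_single', mem_univ,
    if_true, sub_eq_zero]
  exact and_congr_left' (forall₂_congr fun i hi => by rw [hsingle i hi])

end ZeroSum

abbrev Coalition (Ω : Type*) := {R : Finset Ω // R.Nonempty}

theorem sum_card_sub_one_add_card_coalition (Ω : Type*) [Fintype Ω] :
    ∑ R : Coalition Ω, (#R.1 - 1) + Fintype.card (Coalition Ω) =
      Fintype.card Ω * 2 ^ (Fintype.card Ω - 1) := by
  have hempty : ∑ R : {R : Finset Ω // ¬R.Nonempty}, #R.1 = 0 :=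
    sum_eq_zero fun R _ => card_eq_zero.2 (not_nonempty_iff_eq_empty.1 R.2)
  rw [Fintype.card_eq_sum_ones, ← sum_add_distrib, ← Fintype.sum_card_finset,
    ← Fintype.sum_subtype_add_sum_subtype (fun R : Finset Ω => R.Nonempty), hempty, add_zero]
  exact sum_congr rfl fun R _ => Nat.sub_add_cancel (card_pos.2 R.2)

section Games

variable {Ω : Type*} [DecidableEq Ω]

theorem unanimity_apply (R : Finset Ω) (hR : R.Nonempty) (S : Finset Ω) :
    (unanimity R hR : Finset Ω → ℝ) S = if R ⊆ S then 1 else 0 := rfl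

theorem isNullPlayer_unanimity {R : Finset Ω} (hR : R.Nonempty) {i : Ω} (hi : i ∉ R) :
    IsNullPlayer i (unanimity R hR) := fun S => by
  simp only [unanimity_apply, subset_insert_iff_of_notMem hi]

def nullify (i : Ω) : GameSpace Ω →ₗ[ℝ] GameSpace Ω :=
  (LinearMap.funLeft ℝ ℝ fun S : Finset Ω => S.erase i).restrict fun v hv => by
    simpa [GameSpace, LinearMap.funLeft_apply] using hv

theorem nullify_apply (i : Ω) (v : GameSpace Ω) (S : Finset Ω) :
    (nullify i v : Finset Ω → ℝ) S = (v : Finset Ω → ℝ) (S.erase i) := rfl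

theorem nullify_eq_self {i : Ω} {v : GameSpace Ω} (hv : IsNullPlayer i v) : nullify i v = v := by
  ext S
  rw [nullify_apply]
  by_cases hi : i ∈ S
  · rw [← hv (S.erase i), insert_erase hi]
  · rw [erase_eq_of_notMem hi]

theorem nullify_unanimity (i : Ω) {R : Finset Ω} (hR : R.Nonempty) :
    nullify i (unanimity R hR) = if i ∈ R then 0 else unanimity R hR := by
  ext S
  split_ifs with hi <;> simp [nullify_apply, unanimity_apply, subset_erase, hi]

variable [Fintype Ω]

theorem linearIndependent_unanimity :
    LinearIndependent ℝ fun R : Coalition Ω => unanimity R.1 R.2 := by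
  rw [Fintype.linearIndependent_iff]
  intro g hg
  suffices ∀ S : Finset Ω, ∀ hS : S.Nonempty, g ⟨S, hS⟩ = 0 from fun R => this R.1 R.2
  intro S
  induction S using Finset.strongInduction with
  | H S ih =>
    intro hS
    have hS' := congrArg (fun v : GameSpace Ω => (v : Finset Ω → ℝ) S) hg
    simp only [Submodule.coe_sum, Submodule.coe_smul, Finset.sum_apply, Pi.smul_apply,
      unanimity_apply, smul_eq_mul, mul_ite, mul_one, mul_zero, ZeroMemClass.coe_zero,
      Pi.zero_apply] at hS'
    rwa [sum_eq_single ⟨S, hS⟩ (fun R _ hRS => ?_) (by simp), if_pos subset_rfl] at hS'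
    split_ifs with hsub
    · exact ih R.1 (ssubset_of_subset_of_ne hsub fun h => hRS (Subtype.ext h)) R.2
    · rfl

theorem finrank_gameSpace : finrank ℝ (GameSpace Ω) = 2 ^ Fintype.card Ω - 1 := by
  have hker : GameSpace Ω = LinearMap.ker (LinearMap.proj ∅ : (Finset Ω → ℝ) →ₗ[ℝ] ℝ) := by
    ext; rfl
  have h := Module.Dual.finrank_ker_add_one_of_ne_zero
    (f := (LinearMap.proj ∅ : (Finset Ω → ℝ) →ₗ[ℝ] ℝ))
    fun h => one_ne_zero (LinearMap.congr_fun h fun _ => 1)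
  rw [finrank_fintype_fun_eq_card, Fintype.card_finset, ← hker] at h
  omega

theorem card_coalition : Fintype.card (Coalition Ω) = 2 ^ Fintype.card Ω - 1 := by
  rw [Fintype.card_congr (Equiv.subtypeEquivRight fun R : Finset Ω => nonempty_iff_ne_empty),
    Fintype.card_subtype_compl, Fintype.card_subtype_eq, Fintype.card_finset]

noncomputable def unanimityBasis : Basis (Coalition Ω) ℝ (GameSpace Ω) :=
  basisOfLinearIndependentOfCardEqFinrank' _ linearIndependent_unanimity
    (card_coalition.trans finrank_gameSpace.symm)

theorem unanimityBasis_apply (R : Coalition Ω) : unanimityBasis R = unanimity R.1 R.2 := by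
  simp [unanimityBasis]

end Games

section QuasiValues

variable {Ω : Type*} [Fintype Ω] [DecidableEq Ω]

theorem isQuasiValue_iff {φ : GameValue Ω} :
    IsQuasiValue φ ↔ ∀ R : Coalition Ω,
      (∀ i ∉ R.1, φ (unanimity R.1 R.2) i = 0) ∧ ∑ i, φ (unanimity R.1 R.2) i = 1 := by
  refine ⟨fun ⟨hnull, heff⟩ R => ⟨fun i hi => hnull _ i (isNullPlayer_unanimity R.2 hi), ?_⟩,
    fun h => ⟨fun v i hv => ?_, fun v => ?_⟩⟩
  · rw [heff, unanimity_apply, if_pos (subset_univ _)]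
  · have hzero : LinearMap.proj i ∘ₗ φ ∘ₗ nullify i = 0 := unanimityBasis.ext fun R => by
      by_cases hi : i ∈ R.1 <;> simp [unanimityBasis_apply, nullify_unanimity, hi, (h R).1]
    simpa [nullify_eq_self hv] using LinearMap.congr_fun hzero v
  · have heff : coordSum ℝ Ω ∘ₗ φ = LinearMap.proj univ ∘ₗ (GameSpace Ω).subtype :=
      unanimityBasis.ext fun R => by simp [unanimityBasis_apply, (h R).2, unanimity_apply]
    simpa using LinearMap.congr_fun heff v

noncomputable def quasiValueDirection : Submodule ℝ (GameValue Ω) :=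
  (Submodule.pi Set.univ fun R : Coalition Ω => zeroSumIn ℝ R.1).comap
    (unanimityBasis.constr ℝ).symm.toLinearMap

theorem mem_quasiValueDirection {ψ : GameValue Ω} :
    ψ ∈ quasiValueDirection ↔ ∀ R : Coalition Ω, ψ (unanimity R.1 R.2) ∈ zeroSumIn ℝ R.1 := by
  simp [quasiValueDirection, Basis.constr_symm_apply, unanimityBasis_apply]

theorem finrank_quasiValueDirection :
    finrank ℝ (quasiValueDirection (Ω := Ω)) = ∑ R : Coalition Ω, (#R.1 - 1) := by
  rw [quasiValueDirection, Submodule.comap_equiv_eq_map_symm, LinearEquiv.finrank_map_eq,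
    Submodule.finrank_pi_univ]
  exact sum_congr rfl fun R _ => finrank_zeroSumIn R.2

noncomputable def memberValue : GameValue Ω :=
  unanimityBasis.constr ℝ fun R => Pi.single R.2.choose 1

theorem setOf_isQuasiValue : {φ : GameValue Ω | IsQuasiValue φ} =
    ((AffineSubspace.mk' memberValue quasiValueDirection : AffineSubspace ℝ (GameValue Ω)) :
      Set (GameValue Ω)) := by
  ext φ
  simp only [Set.mem_ofPred_eq, SetLike.mem_coe, AffineSubspace.mem_mk', vsub_eq_sub,
    mem_quasiValueDirection, isQuasiValue_iff, LinearMap.sub_apply, memberValue,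
    ← unanimityBasis_apply, Basis.constr_basis]
  exact forall_congr' fun R => (sub_single_mem_zeroSumIn_iff R.2.choose_spec _).symm

end QuasiValues

/-- for the trivial group, the affine space of all quasi-values on
an `n`-player set has dimension `n·2^{n-1} - 2ⁿ + 1`. -/
theorem stmt17 (Ω : Type*) [Fintype Ω] [DecidableEq Ω] :
    (Module.finrank ℝ
        (affineSpan ℝ {φ : GameValue Ω | IsQuasiValue φ}).direction : ℤ) =
      (Fintype.card Ω : ℤ) * 2 ^ (Fintype.card Ω - 1) - 2 ^ Fintype.card Ω + 1 := by
  rw [setOf_isQuasiValue, AffineSubspace.affineSpan_coe, AffineSubspace.direction_mk',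
    finrank_quasiValueDirection]
  have h := sum_card_sub_one_add_card_coalition Ω
  rw [card_coalition] at h
  zify [Nat.one_le_two_pow] at h
  rw [← h, Nat.cast_sum]
  ring
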